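/- Let f be analytic on the unit disk with f(0)=0, f'(0)=1, satisfying Re[(1-z)f'(z)] > 0 on the disk, with Taylor coefficients a_n. Then the second logarithmic coefficient γ_2 = (a_3 - a_2^2/2)/2 satisfies |γ_2| ≤ 4/9, and this bound is sharp. -/

import Mathlib

/-!
Put `p(z) = (1 - z) f'(z)`. Since `Re p > 0` and `p(0) = 1`, the function `ω = (p - 1)/(p + 1)`
maps the disc into itself with `ω(0) = 0`, and `p = (1 + ω)/(1 - ω)`. Comparing Taylor
coefficients up to order two, with `ω(z) = c₁ z + c₂ z² + ⋯`, gives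
`γ₂ = (5 + 4c₁ + 4c₁² + 16c₂)/48`. Schwarz–Pick at the origin, applied to `ω(z)/z`, gives
`|c₂| ≤ 1 - |c₁|²`, hence `48|γ₂| ≤ 21 + 4|c₁| - 12|c₁|² ≤ 64/3`. Equality needs `|c₁| = 1/6` and
`|c₂| = 1 - |c₁|²`; `ω(z) = z (z + 1/6)/(1 + z/6)` attains it with `c₁ = 1/6`, `c₂ = 35/36`.
-/

open Metric Complex ComplexConjugate Filter Topology Set

section Leibniz

variable {𝕜 : Type*} [NontriviallyNormedField 𝕜]

theorem iteratedDeriv_two_fun_mul {𝔸 : Type*} [NormedRing 𝔸] [NormedAlgebra 𝕜 𝔸] {f g : 𝕜 → 𝔸}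
    {x : 𝕜} (hf : ContDiffAt 𝕜 2 f x) (hg : ContDiffAt 𝕜 2 g x) :
    iteratedDeriv 2 (fun y => f y * g y) x =
      iteratedDeriv 2 f x * g x + 2 * (deriv f x * deriv g x) + f x * iteratedDeriv 2 g x := by
  rw [iteratedDeriv_fun_mul hf hg]
  simp only [Nat.reduceAdd, mul_assoc, Finset.sum_range_succ, Finset.range_one,
    Finset.sum_singleton, Nat.choose_zero_right, Nat.cast_one, iteratedDeriv_zero, tsub_zero, one_mul,
    Nat.choose_succ_self_right, Nat.cast_ofNat, iteratedDeriv_one, Nat.add_one_sub_one,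
    Nat.choose_self, tsub_self]
  abel

theorem deriv_id_mul_zero {φ : 𝕜 → 𝕜} (hφ : DifferentiableAt 𝕜 φ 0) :
    deriv (fun z => z * φ z) 0 = φ 0 := by
  rw [deriv_fun_mul differentiableAt_fun_id hφ]
  simp

theorem iteratedDeriv_two_id_mul_zero {φ : 𝕜 → 𝕜} (hφ : ContDiffAt 𝕜 2 φ 0) :
    iteratedDeriv 2 (fun z => z * φ z) 0 = 2 * deriv φ 0 := by
  rw [iteratedDeriv_two_fun_mul (f := fun z => z) contDiffAt_fun_id hφ]
  simp [iteratedDeriv_fun_id_zero]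

end Leibniz

theorem one_sub_conj_mul_ne_zero {a w : ℂ} (ha : ‖a‖ < 1) (hw : ‖w‖ ≤ 1) :
    1 - conj a * w ≠ 0 := by
  have : ‖conj a * w‖ < 1 := by
    rw [norm_mul, norm_conj]
    nlinarith [norm_nonneg a, norm_nonneg w]
  intro h
  rw [← sub_eq_zero.mp h, norm_one] at this
  exact this.false

theorem normSq_one_sub_conj_mul_sub_normSq_sub (a w : ℂ) :
    normSq (1 - conj a * w) - normSq (w - a) = (1 - normSq a) * (1 - normSq w) := by
  simp only [normSq_apply, sub_re, sub_im, one_re, one_im, mul_re, mul_im, conj_re, conj_im]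
  ring

theorem norm_sub_div_one_sub_conj_mul_le_one {a w : ℂ} (ha : ‖a‖ < 1) (hw : ‖w‖ ≤ 1) :
    ‖(w - a) / (1 - conj a * w)‖ ≤ 1 := by
  rw [norm_div, div_le_one (norm_pos_iff.mpr (one_sub_conj_mul_ne_zero ha hw)),
    ← sq_le_sq₀ (norm_nonneg _) (norm_nonneg _), Complex.sq_norm, Complex.sq_norm, ← sub_nonneg,
    normSq_one_sub_conj_mul_sub_normSq_sub, ← Complex.sq_norm, ← Complex.sq_norm]
  apply mul_nonneg <;> nlinarith [norm_nonneg a, norm_nonneg w]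

theorem norm_deriv_le_one_sub_sq_div_of_mapsTo_closedBall {φ : ℂ → ℂ} {c : ℂ} {R : ℝ}
    (hφ : DifferentiableOn ℂ φ (ball c R)) (hR : 0 < R)
    (hmaps : MapsTo φ (ball c R) (closedBall 0 1)) :
    ‖deriv φ c‖ ≤ (1 - ‖φ c‖ ^ 2) / R := by
  have hc : ball c R ∈ 𝓝 c := ball_mem_nhds c hR
  have hφ1 : ∀ z ∈ ball c R, ‖φ z‖ ≤ 1 := fun z hz => mem_closedBall_zero_iff.mp (hmaps hz)
  set a := φ c with ha_def
  rcases (hφ1 c (mem_ball_self hR)).eq_or_lt with ha | ha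
  · have hmax : IsLocalMax (norm ∘ φ) c :=
      eventually_of_mem hc fun z hz => (hφ1 z hz).trans ha.ge
    have hconst : φ =ᶠ[𝓝 c] fun _ => a := eventually_eq_of_isLocalMax_norm
      (eventually_of_mem hc fun z hz => hφ.differentiableAt (isOpen_ball.mem_nhds hz)) hmax
    rw [hconst.deriv_eq, ha]
    simp
  -- Compose with the disc automorphism sending `a` to `0` and apply the Schwarz lemma.
  · have hden : ∀ z ∈ ball c R, 1 - conj a * φ z ≠ 0 := fun z hz =>
      one_sub_conj_mul_ne_zero ha (hφ1 z hz)
    set ψ : ℂ → ℂ := fun z => (φ z - a) / (1 - conj a * φ z)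
    have hψ : DifferentiableOn ℂ ψ (ball c R) :=
      (hφ.sub_const a).div ((hφ.const_mul _).const_sub 1) hden
    have hψmaps : MapsTo ψ (ball c R) (closedBall (ψ c) 1) := fun z hz => by
      rw [show ψ c = 0 by simp [ψ, a], mem_closedBall_zero_iff]
      exact norm_sub_div_one_sub_conj_mul_le_one ha (hφ1 z hz)
    have hφc : HasDerivAt φ (deriv φ c) c := (hφ.differentiableAt hc).hasDerivAt
    have hψc : deriv ψ c = deriv φ c / (1 - conj a * a) := by
      have hψ' : HasDerivAt ψ _ c :=
        (hφc.sub_const a).div ((hφc.const_mul _).const_sub 1) (hden c (mem_ball_self hR))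
      rw [hψ'.deriv, ← ha_def, sub_self, zero_mul, sub_zero, sq,
        mul_div_mul_right _ _ (hden c (mem_ball_self hR))]
    have hnorm : ‖1 - conj a * a‖ = 1 - ‖a‖ ^ 2 := by
      rw [mul_comm, mul_conj, ← Complex.sq_norm, ← ofReal_one, ← ofReal_sub,
        norm_real, Real.norm_of_nonneg (by nlinarith [norm_nonneg a])]
    have key := norm_deriv_le_div_of_mapsTo_ball hψ hψmaps hR
    rw [hψc, norm_div, hnorm, div_le_div_iff₀ (by nlinarith [norm_nonneg a]) hR] at key
    rw [le_div_iff₀ hR]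
    linarith

theorem norm_iteratedDeriv_two_div_two_le_of_mapsTo_closedBall {ω : ℂ → ℂ}
    (hω : DifferentiableOn ℂ ω (ball 0 1)) (hω0 : ω 0 = 0)
    (hmaps : MapsTo ω (ball 0 1) (closedBall 0 1)) :
    ‖iteratedDeriv 2 ω 0 / 2‖ ≤ 1 - ‖deriv ω 0‖ ^ 2 := by
  have h0 : ball (0 : ℂ) 1 ∈ 𝓝 0 := ball_mem_nhds 0 one_pos
  set φ := dslope ω 0
  have hφ : DifferentiableOn ℂ φ (ball 0 1) := (differentiableOn_dslope h0).mpr hω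
  have hφmaps : MapsTo φ (ball 0 1) (closedBall 0 1) := fun z hz => by
    simpa using norm_dslope_le_div_of_mapsTo_ball hω (by rwa [hω0]) hz
  have hωφ : ω = fun z => z * φ z := funext fun z => by
    simpa using (sub_smul_dslope_of_zero hω0 z).symm
  have hφ0 : ContDiffAt ℂ 2 φ 0 := (hφ.analyticAt h0).contDiffAt
  rw [hωφ, deriv_id_mul_zero (hφ0.differentiableAt two_ne_zero),
    iteratedDeriv_two_id_mul_zero hφ0, mul_div_cancel_left₀ _ two_ne_zero]
  simpa using norm_deriv_le_one_sub_sq_div_of_mapsTo_closedBall hφ one_pos hφmaps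

theorem norm_sub_one_div_add_one_lt_one {p : ℂ} (hp : 0 < p.re) : ‖(p - 1) / (p + 1)‖ < 1 := by
  have hp1 : p + 1 ≠ 0 := fun h => by
    have := congrArg re h
    simp only [add_re, one_re, zero_re] at this
    linarith
  rw [norm_div, div_lt_one (norm_pos_iff.mpr hp1), ← sq_lt_sq₀ (norm_nonneg _) (norm_nonneg _),
    Complex.sq_norm, Complex.sq_norm]
  simp only [normSq_apply, sub_re, sub_im, add_re, add_im, one_re, one_im]
  nlinarith

theorem re_one_add_div_one_sub_pos {w : ℂ} (hw : ‖w‖ < 1) : 0 < ((1 + w) / (1 - w)).re := by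
  have hw1 : 1 - w ≠ 0 := fun h => by simp [← sub_eq_zero.mp h] at hw
  have hsq : normSq w < 1 := by
    rw [← Complex.sq_norm]
    nlinarith [norm_nonneg w]
  rw [div_re, ← add_div]
  apply div_pos _ (normSq_pos.mpr hw1)
  rw [normSq_apply] at hsq
  simp only [add_re, add_im, sub_re, sub_im, one_re, one_im]
  nlinarith

theorem deriv_and_iteratedDeriv_two_of_mul_one_sub_eq_one_add {p ω : ℂ → ℂ}
    (hp : AnalyticAt ℂ p 0) (hω : AnalyticAt ℂ ω 0) (hω0 : ω 0 = 0)
    (h : (fun z => p z * (1 - ω z)) =ᶠ[𝓝 0] fun z => 1 + ω z) :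
    deriv p 0 = 2 * deriv ω 0 ∧
      iteratedDeriv 2 p 0 = 2 * iteratedDeriv 2 ω 0 + 4 * deriv ω 0 ^ 2 := by
  have hp0 : p 0 = 1 := by simpa [hω0] using h.eq_of_nhds
  have hω' : ContDiffAt ℂ 2 (fun z => 1 - ω z) 0 := contDiffAt_const.sub hω.contDiffAt
  have h1 := h.deriv_eq
  have h2 := h.iteratedDeriv_eq 2
  rw [deriv_fun_mul hp.differentiableAt (hω'.differentiableAt two_ne_zero), deriv_const_sub,
    deriv_const_add, hp0, hω0] at h1
  rw [iteratedDeriv_two_fun_mul hp.contDiffAt hω', iteratedDeriv_const_sub two_pos,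
    iteratedDeriv_const_add two_pos, iteratedDeriv_neg, deriv_const_sub, hp0, hω0] at h2
  constructor
  · linear_combination h1
  · linear_combination h2 + 2 * deriv ω 0 * h1

noncomputable def secondLogCoeff (f : ℂ → ℂ) : ℂ :=
  (iteratedDeriv 3 f 0 / 6 - (iteratedDeriv 2 f 0 / 2) ^ 2 / 2) / 2

theorem secondLogCoeff_eq_of_eventuallyEq {f ω : ℂ → ℂ} (hf : AnalyticAt ℂ f 0)
    (hω : AnalyticAt ℂ ω 0) (hω0 : ω 0 = 0)
    (h : (fun z => (1 - z) * deriv f z * (1 - ω z)) =ᶠ[𝓝 0] fun z => 1 + ω z) :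
    secondLogCoeff f =
      (5 + 4 * deriv ω 0 + 4 * deriv ω 0 ^ 2 + 16 * (iteratedDeriv 2 ω 0 / 2)) / 48 := by
  set g := deriv f
  have hg : AnalyticAt ℂ g 0 := hf.deriv
  have hg0 : g 0 = 1 := by simpa [hω0] using h.eq_of_nhds
  have hl : ContDiffAt ℂ 2 (fun z : ℂ => 1 - z) 0 := contDiffAt_const.sub contDiffAt_fun_id
  have hp' : deriv (fun z => (1 - z) * g z) 0 = deriv g 0 - 1 := by
    rw [deriv_fun_mul (hl.differentiableAt two_ne_zero) hg.differentiableAt, deriv_const_sub,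
      deriv_id'', hg0]
    ring
  have hp'' : iteratedDeriv 2 (fun z => (1 - z) * g z) 0 =
      iteratedDeriv 2 g 0 - 2 * deriv g 0 := by
    rw [iteratedDeriv_two_fun_mul hl hg.contDiffAt, iteratedDeriv_const_sub two_pos,
      deriv_const_sub, deriv_id'', hg0]
    simp only [iteratedDeriv_neg, iteratedDeriv_fun_id_zero, OfNat.ofNat_ne_one, ↓reduceIte,
      neg_zero]
    ring
  obtain ⟨h1, h2⟩ := deriv_and_iteratedDeriv_two_of_mul_one_sub_eq_one_add
    (p := fun z => (1 - z) * g z) ((analyticAt_const.sub analyticAt_id).mul hg) hω hω0 h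
  rw [hp'] at h1
  rw [hp''] at h2
  have hf2 : iteratedDeriv 2 f 0 = deriv g 0 := by rw [iteratedDeriv_succ', iteratedDeriv_one]
  have hf3 : iteratedDeriv 3 f 0 = iteratedDeriv 2 g 0 := by rw [iteratedDeriv_succ']
  rw [secondLogCoeff, hf2, hf3]
  linear_combination h2 / 12 + (5 / 48 - deriv g 0 / 16 - deriv ω 0 / 8) * h1

theorem norm_five_add_four_mul_add_four_mul_sq_add_sixteen_mul_div_le {c₁ c₂ : ℂ}
    (h : ‖c₂‖ ≤ 1 - ‖c₁‖ ^ 2) : ‖(5 + 4 * c₁ + 4 * c₁ ^ 2 + 16 * c₂) / 48‖ ≤ 4 / 9 := by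
  have htri : ‖5 + 4 * c₁ + 4 * c₁ ^ 2 + 16 * c₂‖ ≤
      5 + 4 * ‖c₁‖ + 4 * ‖c₁‖ ^ 2 + 16 * ‖c₂‖ := by
    refine norm_add₄_le.trans_eq ?_
    simp [norm_pow]
  rw [norm_div, div_le_iff₀ (by norm_num), Complex.norm_ofNat]
  nlinarith [sq_nonneg (6 * ‖c₁‖ - 1)]

theorem norm_secondLogCoeff_le {f : ℂ → ℂ} (hf : AnalyticOn ℂ f (ball 0 1))
    (hre : ∀ z ∈ ball (0 : ℂ) 1, 0 < ((1 - z) * deriv f z).re) (hf' : deriv f 0 = 1) :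
    ‖secondLogCoeff f‖ ≤ 4 / 9 := by
  have h0 : ball (0 : ℂ) 1 ∈ 𝓝 0 := ball_mem_nhds 0 one_pos
  have hfa : AnalyticOnNhd ℂ f (ball 0 1) := isOpen_ball.analyticOn_iff_analyticOnNhd.mp hf
  set p : ℂ → ℂ := fun z => (1 - z) * deriv f z
  have hp1 : ∀ z ∈ ball (0 : ℂ) 1, p z + 1 ≠ 0 := fun z hz h => by
    have := congrArg re h
    simp only [add_re, one_re, zero_re] at this
    linarith [hre z hz]
  have hpa : AnalyticOnNhd ℂ p (ball 0 1) := fun z hz =>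
    (analyticAt_const.sub analyticAt_id).mul (hfa z hz).deriv
  set ω : ℂ → ℂ := fun z => (p z - 1) / (p z + 1)
  have hωa : AnalyticOnNhd ℂ ω (ball 0 1) := fun z hz =>
    ((hpa z hz).sub analyticAt_const).div ((hpa z hz).add analyticAt_const) (hp1 z hz)
  have hω0 : ω 0 = 0 := by simp [ω, p, hf']
  have hωmaps : MapsTo ω (ball 0 1) (closedBall 0 1) := fun z hz =>
    mem_closedBall_zero_iff.mpr (norm_sub_one_div_add_one_lt_one (hre z hz)).le
  have hrel : (fun z => (1 - z) * deriv f z * (1 - ω z)) =ᶠ[𝓝 0] fun z => 1 + ω z :=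
    eventually_of_mem h0 fun z hz => by
      change p z * (1 - (p z - 1) / (p z + 1)) = 1 + (p z - 1) / (p z + 1)
      field_simp [hp1 z hz]
      ring
  rw [secondLogCoeff_eq_of_eventuallyEq (hfa 0 (mem_ball_self one_pos))
    (hωa 0 (mem_ball_self one_pos)) hω0 hrel]
  exact norm_five_add_four_mul_add_four_mul_sq_add_sixteen_mul_div_le
    (norm_iteratedDeriv_two_div_two_le_of_mapsTo_closedBall hωa.differentiableOn hω0 hωmaps)

theorem one_sub_mem_slitPlane_of_norm_lt_one {z : ℂ} (hz : ‖z‖ < 1) : 1 - z ∈ slitPlane := by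
  simpa [sub_eq_add_neg] using mem_slitPlane_of_norm_lt_one (z := -z) (by simpa using hz)

/- `extremalF1` is the primitive, vanishing at `0`, of `(1 + ω)/((1 - ω)(1 - z))` for
`ω = extremalSchwarz`. -/
noncomputable def extremalSchwarz (z : ℂ) : ℂ := z * ((z + 1 / 6) / (1 + z / 6))

noncomputable def extremalF1 (z : ℂ) : ℂ :=
  7 / 6 * (1 - z)⁻¹ + 7 / 12 * log (1 - z) + 5 / 12 * log (1 + z) - 7 / 6

theorem norm_extremalSchwarz_lt_one {z : ℂ} (hz : ‖z‖ < 1) : ‖extremalSchwarz z‖ < 1 := by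
  have hφ : ‖(z + 1 / 6) / (1 + z / 6)‖ ≤ 1 := by
    have hconj : conj (-1 / 6 : ℂ) = -1 / 6 := by rw [map_div₀, map_neg, map_one, map_ofNat]
    have := norm_sub_div_one_sub_conj_mul_le_one (a := -1 / 6) (by norm_num) hz.le
    rwa [hconj, show z - -1 / 6 = z + 1 / 6 by ring, show 1 - -1 / 6 * z = 1 + z / 6 by ring]
      at this
  rw [extremalSchwarz, norm_mul]
  nlinarith [norm_nonneg ((z + 1 / 6) / (1 + z / 6)), norm_nonneg z]

theorem hasDerivAt_extremalF1 {z : ℂ} (hz : ‖z‖ < 1) :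
    HasDerivAt extremalF1
      (7 / 6 * ((1 - z) ^ 2)⁻¹ - 7 / 12 * (1 - z)⁻¹ + 5 / 12 * (1 + z)⁻¹) z := by
  have h1 := one_sub_mem_slitPlane_of_norm_lt_one hz
  have h2 := mem_slitPlane_of_norm_lt_one hz
  have hsub : HasDerivAt (fun w : ℂ => 1 - w) (-1) z := by
    simpa using (hasDerivAt_id z).const_sub 1
  have hadd : HasDerivAt (fun w : ℂ => 1 + w) 1 z := by
    simpa using (hasDerivAt_id z).const_add 1
  have hd : HasDerivAt extremalF1
      (7 / 6 * (- -1 / (1 - z) ^ 2) + 7 / 12 * (-1 / (1 - z)) + 5 / 12 * (1 / (1 + z))) z :=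
    ((((hsub.inv (slitPlane_ne_zero h1)).const_mul (7 / 6)).add
      ((hsub.clog h1).const_mul (7 / 12))).add ((hadd.clog h2).const_mul (5 / 12))).sub_const _
  exact hd.congr_deriv (by ring)

theorem differentiableOn_extremalF1 : DifferentiableOn ℂ extremalF1 (ball 0 1) := fun _ hz =>
  (hasDerivAt_extremalF1 (mem_ball_zero_iff.mp hz)).differentiableAt.differentiableWithinAt

theorem one_sub_mul_deriv_extremalF1 {z : ℂ} (hz : ‖z‖ < 1) :
    (1 - z) * deriv extremalF1 z * (1 - extremalSchwarz z) = 1 + extremalSchwarz z := by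
  have h1 : 1 - z ≠ 0 := slitPlane_ne_zero (one_sub_mem_slitPlane_of_norm_lt_one hz)
  have h2 : 1 + z ≠ 0 := slitPlane_ne_zero (mem_slitPlane_of_norm_lt_one hz)
  have h3 : 6 + z ≠ 0 := fun h => by
    rw [show z = -6 by linear_combination h] at hz
    norm_num at hz
  rw [(hasDerivAt_extremalF1 hz).deriv, extremalSchwarz]
  field_simp
  ring

theorem extremalF1_mem_F1 :
    AnalyticOn ℂ extremalF1 (ball 0 1) ∧ extremalF1 0 = 0 ∧ deriv extremalF1 0 = 1 ∧
      ∀ z ∈ ball (0 : ℂ) 1, 0 < ((1 - z) * deriv extremalF1 z).re := by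
  refine ⟨(differentiableOn_extremalF1.analyticOnNhd isOpen_ball).analyticOn,
    by simp [extremalF1], ?_, fun z hz => ?_⟩
  · simpa [extremalSchwarz] using one_sub_mul_deriv_extremalF1 (z := 0) (by simp)
  · have hω := norm_extremalSchwarz_lt_one (mem_ball_zero_iff.mp hz)
    have hω1 : 1 - extremalSchwarz z ≠ 0 := fun h => by simp [← sub_eq_zero.mp h] at hω
    rw [eq_div_of_mul_eq hω1 (one_sub_mul_deriv_extremalF1 (mem_ball_zero_iff.mp hz))]
    exact re_one_add_div_one_sub_pos hω

theorem secondLogCoeff_extremalF1 : secondLogCoeff extremalF1 = 4 / 9 := by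
  have h0 : ball (0 : ℂ) 1 ∈ 𝓝 0 := ball_mem_nhds 0 one_pos
  have hφ : ContDiffAt ℂ 2 (fun z : ℂ => (z + 1 / 6) / (1 + z / 6)) 0 := by
    fun_prop (disch := norm_num)
  have hφ' : deriv (fun z : ℂ => (z + 1 / 6) / (1 + z / 6)) 0 = 35 / 36 := by
    have hd : HasDerivAt (fun z : ℂ => (z + 1 / 6) / (1 + z / 6)) _ 0 :=
      ((hasDerivAt_id' 0).add_const _).div ((hasDerivAt_id' 0).div_const 6 |>.const_add 1)
        (by norm_num)
    rw [hd.deriv]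
    norm_num
  rw [secondLogCoeff_eq_of_eventuallyEq (differentiableOn_extremalF1.analyticAt h0)
    (by unfold extremalSchwarz; fun_prop (disch := norm_num)) (by simp [extremalSchwarz])
    (eventually_of_mem h0 fun z hz => one_sub_mul_deriv_extremalF1 (mem_ball_zero_iff.mp hz)),
    show extremalSchwarz = fun z => z * ((z + 1 / 6) / (1 + z / 6)) from rfl,
    deriv_id_mul_zero (hφ.differentiableAt two_ne_zero), iteratedDeriv_two_id_mul_zero hφ, hφ']
  norm_num

theorem F1_gamma2 :
    (∀ f : ℂ → ℂ, AnalyticOn ℂ f (ball 0 1) → f 0 = 0 → deriv f 0 = 1 →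
      (∀ z ∈ ball (0:ℂ) 1, 0 < ((1 - z) * deriv f z).re) →
      ‖(iteratedDeriv 3 f 0 / 6 - (iteratedDeriv 2 f 0 / 2) ^ 2 / 2) / 2‖ ≤ 4/9) ∧
    ∃ f : ℂ → ℂ, AnalyticOn ℂ f (ball 0 1) ∧ f 0 = 0 ∧ deriv f 0 = 1 ∧
      (∀ z ∈ ball (0:ℂ) 1, 0 < ((1 - z) * deriv f z).re) ∧
      ‖(iteratedDeriv 3 f 0 / 6 - (iteratedDeriv 2 f 0 / 2) ^ 2 / 2) / 2‖ = 4/9 := by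
  obtain ⟨hana, hzero, hderiv, hre⟩ := extremalF1_mem_F1
  refine ⟨fun f hf _ hf' hre => norm_secondLogCoeff_le hf hre hf',
    extremalF1, hana, hzero, hderiv, hre, ?_⟩
  change ‖secondLogCoeff extremalF1‖ = 4 / 9
  rw [secondLogCoeff_extremalF1]
  norm_num
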